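/- arXiv:2007.02743 — 5 statements merged into one kernel-verified Lean document; each statement's English description precedes it below -/
import Mathlib

section
/- Let 𝕜 be a commutative ring, G a group, n ≥ 1, and W any A_n-module. The 𝕜-linear map A_n ⊗_{A_{n−1}} W → V ⊗_𝕜 W determined by γ ⊗ w ↦ (γ·e_n) ⊗ (γ·w) for γ ∈ G_n, w ∈ W, is a well-defined isomorphism of A_n-modules (where V ⊗_𝕜 W carries the diagonal G_n-action), with inverse determined by g e_i ⊗ w ↦ g^{(i)} π_i ⊗ π_i^{−1} (g^{−1})^{(i)} · w for 1 ≤ i ≤ n, g ∈ G, w ∈ W. -/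
/-!
`G_n` acts transitively on the basis `{g e_i}` of `V`, with `g^{(i)} π_i` carrying `e_n` to
`g e_i`, and the stabilizer of `e_n` is `G_{n-1}`. For any group `Γ` acting on `X` with stabilizer
`H` of a point `x₀` and a section `s` of the orbit map, `γ ⊗ w ↦ (γ • x₀) ⊗ γ • w` kills the
relations of `𝕜[Γ] ⊗_{𝕜[H]} W` because `H` fixes `x₀`, and `x ⊗ w ↦ s x ⊗ (s x)⁻¹ • w` inverts it
because every `γ` lies in the coset `s (γ • x₀) H`. Equivariance for the diagonal action is
`(γ δ) • x₀ = γ • (δ • x₀)`.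
-/

namespace GPC

variable (G : Type*) [Group G]

/-- The action of the symmetric group on `Fin n → G` permuting coordinates:
`(π • g) i = g (π⁻¹ i)`. -/
def wreathAut (n : ℕ) : Equiv.Perm (Fin n) →* MulAut (Fin n → G) where
  toFun π :=
    { toFun := fun g => g ∘ ⇑π⁻¹
      invFun := fun g => g ∘ ⇑π
      left_inv := fun g => by funext i; simp
      right_inv := fun g => by funext i; simp
      map_mul' := fun g h => rfl }
  map_one' := by ext g i; simp
  map_mul' := fun π σ => by ext g i; simp

/-- The wreath product `G_n = Gⁿ ⋊ S_n`. -/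
abbrev Wr (n : ℕ) := (Fin n → G) ⋊[wreathAut G n] Equiv.Perm (Fin n)

variable {G}

/-- `π_i = s_i s_{i+1} ⋯ s_{n-1}` (as a product of adjacent transpositions,
with 0-based indexing); `π_(last) = 1`. -/
def piPerm {n : ℕ} (i : Fin n) : Equiv.Perm (Fin n) :=
  ((List.range n).map (fun j =>
    if h : i.val ≤ j ∧ j + 1 < n then Equiv.swap ⟨j, by omega⟩ ⟨j + 1, h.2⟩
    else (1 : Equiv.Perm (Fin n)))).prod

variable (G) in
/-- The subgroup of `G_{n+1}` corresponding to `G_n`: those elements whose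
permutation fixes the last index and whose `Gⁿ⁺¹`-component is `1` there. -/
def fixLast (n : ℕ) : Subgroup (Wr G (n + 1)) where
  carrier := {x | x.left (Fin.last n) = 1 ∧ x.right (Fin.last n) = Fin.last n}
  one_mem' := by
    constructor <;> simp
  mul_mem' := by
    rintro x y ⟨hx1, hx2⟩ ⟨hy1, hy2⟩
    constructor
    · have : x.right⁻¹ (Fin.last n) = Fin.last n := by
        rw [Equiv.Perm.inv_eq_iff_eq]; exact hx2.symm
      simp [SemidirectProduct.mul_left, wreathAut, this, hx1, hy1]
      all_goals simp_all [Equiv.Perm.inv_def]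
    · simp [SemidirectProduct.mul_right, hx2, hy2]
  inv_mem' := by
    rintro x ⟨hx1, hx2⟩
    have h2 : x.right⁻¹ (Fin.last n) = Fin.last n := by
      rw [Equiv.Perm.inv_eq_iff_eq]; exact hx2.symm
    constructor
    · simp [SemidirectProduct.inv_left, wreathAut, hx2, hx1]
      all_goals simp_all [Equiv.Perm.inv_def]
    · simp [SemidirectProduct.inv_right, h2]

/-- The coset representative `g^{(i)} π_i ∈ G_{n+1}`. -/
def cosetRep {n : ℕ} (i : Fin (n + 1)) (g : G) : Wr G (n + 1) :=
  SemidirectProduct.inl (Pi.mulSingle i g) * SemidirectProduct.inr (piPerm i)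

section Statement2

variable (𝕜 : Type*) [CommRing 𝕜] (G : Type*) [Group G] (n : ℕ)
variable (W : Type*) [AddCommGroup W] [Module 𝕜 W]
variable (ρW : Representation 𝕜 (Wr G (n + 1)) W)

/-- The submodule of relations defining `A_n ⊗_{A_{n-1}} W` inside
`A_n ⊗_𝕜 W ≅ (G_n →₀ W)`: it is spanned by the elements `γ h ⊗ w - γ ⊗ h • w`
for `γ ∈ G_n`, `h ∈ G_{n-1}` and `w ∈ W`. -/
noncomputable def tensorRel : Submodule 𝕜 ((Wr G (n + 1)) →₀ W) :=
  Submodule.span 𝕜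
    {z | ∃ (γ : Wr G (n + 1)) (h : fixLast G n) (w : W),
      z = Finsupp.single (γ * (h : Wr G (n + 1))) w - Finsupp.single γ (ρW h w)}

/-- The action of `γ ∈ G_n` on `A_n ⊗_𝕜 W ≅ (G_n →₀ W)` by left multiplication
on the first factor. -/
noncomputable def actInd (γ : Wr G (n + 1)) : ((Wr G (n + 1)) →₀ W) →ₗ[𝕜] ((Wr G (n + 1)) →₀ W) :=
  Finsupp.lmapDomain W 𝕜 (fun δ => γ * δ)

/-- The image of the basis vector `g e_i` of `V` under the action of `γ ∈ G_n`:
`(h π) · (g e_i) = h_{π i} g e_{π i}`. -/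
def actBasis (γ : Wr G (n + 1)) (p : G × Fin (n + 1)) : G × Fin (n + 1) :=
  (γ.left (γ.right p.2) * p.1, γ.right p.2)

/-- The diagonal action of `γ ∈ G_n` on `V ⊗_𝕜 W ≅ ((G × Fin (n+1)) →₀ W)`:
`γ • (g e_i ⊗ w) = (γ · g e_i) ⊗ (γ • w)`. -/
noncomputable def actDiag (γ : Wr G (n + 1)) :
    ((G × Fin (n + 1)) →₀ W) →ₗ[𝕜] ((G × Fin (n + 1)) →₀ W) :=
  Finsupp.lsum 𝕜 (fun p => (Finsupp.lsingle (actBasis G n γ p)) ∘ₗ (ρW γ : W →ₗ[𝕜] W))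

end Statement2

section Induced

variable {𝕜 Γ X W : Type*} [CommRing 𝕜] [Group Γ] [AddCommGroup W] [Module 𝕜 W]
variable (H : Subgroup Γ) (ρ : Representation 𝕜 Γ W)

noncomputable def inducedRel : Submodule 𝕜 (Γ →₀ W) :=
  Submodule.span 𝕜
    {z | ∃ (γ : Γ) (h : H) (w : W), z = Finsupp.single (γ * (h : Γ)) w - Finsupp.single γ (ρ h w)}

theorem inducedRel_mk_single_mul (γ : Γ) {h : Γ} (hh : h ∈ H) (w : W) :
    (Submodule.Quotient.mk (Finsupp.single (γ * h) w) : (Γ →₀ W) ⧸ inducedRel H ρ)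
      = Submodule.Quotient.mk (Finsupp.single γ (ρ h w)) :=
  (Submodule.Quotient.eq _).2 (Submodule.subset_span ⟨γ, ⟨h, hh⟩, w, rfl⟩)

noncomputable def permToInduced (s : X → Γ) : (X →₀ W) →ₗ[𝕜] ((Γ →₀ W) ⧸ inducedRel H ρ) :=
  Finsupp.lsum 𝕜 fun x =>
    (inducedRel H ρ).mkQ ∘ₗ Finsupp.lsingle (s x) ∘ₗ (ρ (s x)⁻¹ : W →ₗ[𝕜] W)

@[simp]
theorem permToInduced_single (s : X → Γ) (x : X) (w : W) :
    permToInduced H ρ s (Finsupp.single x w)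
      = Submodule.Quotient.mk (Finsupp.single (s x) (ρ (s x)⁻¹ w)) := by
  simp [permToInduced]

variable [MulAction Γ X] {H ρ}

noncomputable def diagonalMap (ρ : Representation 𝕜 Γ W) (γ : Γ) : (X →₀ W) →ₗ[𝕜] (X →₀ W) :=
  Finsupp.lsum 𝕜 fun x => Finsupp.lsingle (γ • x) ∘ₗ (ρ γ : W →ₗ[𝕜] W)

noncomputable def permOfFree (x₀ : X) (ρ : Representation 𝕜 Γ W) : (Γ →₀ W) →ₗ[𝕜] (X →₀ W) :=
  Finsupp.lsum 𝕜 fun γ => Finsupp.lsingle (γ • x₀) ∘ₗ (ρ γ : W →ₗ[𝕜] W)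

@[simp]
theorem permOfFree_single (x₀ : X) (γ : Γ) (w : W) :
    permOfFree x₀ ρ (Finsupp.single γ w) = Finsupp.single (γ • x₀) (ρ γ w) := by
  simp [permOfFree]

theorem permOfFree_lmapDomain_mul (x₀ : X) (γ : Γ) (y : Γ →₀ W) :
    permOfFree x₀ ρ (Finsupp.lmapDomain W 𝕜 (γ * ·) y) = diagonalMap ρ γ (permOfFree x₀ ρ y) := by
  induction y using Finsupp.induction_linear with
  | zero => simp
  | add y z hy hz => simp only [map_add, hy, hz]
  | single δ w => simp [diagonalMap, mul_smul]

theorem inducedRel_le_ker_permOfFree {x₀ : X} (hH : H ≤ MulAction.stabilizer Γ x₀) :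
    inducedRel H ρ ≤ LinearMap.ker (permOfFree x₀ ρ) := by
  rw [inducedRel, Submodule.span_le]
  rintro _ ⟨γ, ⟨h, hh⟩, w, rfl⟩
  simp [mul_smul, MulAction.mem_stabilizer_iff.1 (hH hh)]

noncomputable def inducedToPerm {x₀ : X} (hH : H ≤ MulAction.stabilizer Γ x₀) :
    ((Γ →₀ W) ⧸ inducedRel H ρ) →ₗ[𝕜] (X →₀ W) :=
  (inducedRel H ρ).liftQ (permOfFree x₀ ρ) (inducedRel_le_ker_permOfFree hH)

variable {x₀ : X} {s : X → Γ}

theorem inducedToPerm_comp_permToInduced {hH : H ≤ MulAction.stabilizer Γ x₀}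
    (hs : ∀ x, s x • x₀ = x) :
    inducedToPerm (ρ := ρ) hH ∘ₗ permToInduced H ρ s = LinearMap.id := by
  ext x w
  simp [inducedToPerm, hs, ← Module.End.mul_apply, ← map_mul]

/-- `γ = s (γ • x₀) * h` with `h` in the stabilizer, and moving `h` across the tensor sign
turns `γ ⊗ w` into the representative `s (γ • x₀) ⊗ h • w`. -/
theorem permToInduced_comp_inducedToPerm (hH : H = MulAction.stabilizer Γ x₀)
    (hs : ∀ x, s x • x₀ = x) :
    permToInduced H ρ s ∘ₗ inducedToPerm (ρ := ρ) hH.le = LinearMap.id := by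
  refine Submodule.linearMap_qext _ (Finsupp.lhom_ext fun γ w => ?_)
  set c := s (γ • x₀)
  have hc : c⁻¹ * γ ∈ H := by
    rw [hH, MulAction.mem_stabilizer_iff, mul_smul, inv_smul_eq_iff, hs]
  have key := inducedRel_mk_single_mul H ρ c hc w
  rw [mul_inv_cancel_left, map_mul, Module.End.mul_apply] at key
  simpa [inducedToPerm] using key.symm

noncomputable def inducedEquivPerm (hH : H = MulAction.stabilizer Γ x₀)
    (hs : ∀ x, s x • x₀ = x) : ((Γ →₀ W) ⧸ inducedRel H ρ) ≃ₗ[𝕜] (X →₀ W) :=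
  LinearEquiv.ofLinearMap (inducedToPerm hH.le) (permToInduced H ρ s)
    (inducedToPerm_comp_permToInduced hs) (permToInduced_comp_inducedToPerm hH hs)

theorem inducedEquivPerm_symm_single (hH : H = MulAction.stabilizer Γ x₀)
    (hs : ∀ x, s x • x₀ = x) (x : X) (w : W) :
    (inducedEquivPerm (ρ := ρ) hH hs).symm (Finsupp.single x w)
      = Submodule.Quotient.mk (Finsupp.single (s x) (ρ (s x)⁻¹ w)) :=
  permToInduced_single H ρ s x w

end Induced

section Wreath

variable {n : ℕ}

instance : MulAction (Wr G n) (G × Fin n) where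
  smul γ p := (γ.left (γ.right p.2) * p.1, γ.right p.2)
  one_smul p := by
    change ((1 : Fin n → G) _ * p.1, _) = p
    simp
  mul_smul γ δ p := by
    change ((γ * δ).left ((γ * δ).right p.2) * p.1, (γ * δ).right p.2)
      = (γ.left (γ.right (δ.right p.2)) * (δ.left (δ.right p.2) * p.1), γ.right (δ.right p.2))
    simp [wreathAut, mul_assoc]

theorem wr_smul_def (γ : Wr G n) (p : G × Fin n) :
    γ • p = (γ.left (γ.right p.2) * p.1, γ.right p.2) :=
  rfl

theorem fixLast_eq_stabilizer :
    fixLast G n = MulAction.stabilizer (Wr G (n + 1)) ((1 : G), Fin.last n) := by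
  ext γ
  change _ ∧ _ ↔ γ • _ = _
  rw [wr_smul_def, Prod.ext_iff, mul_one]
  constructor <;> rintro ⟨hl, hr⟩ <;> simp_all

/-- The `j`-th factor of the product defining `piPerm i`. -/
def piFactor (i : Fin (n + 1)) (j : ℕ) : Equiv.Perm (Fin (n + 1)) :=
  if h : i.val ≤ j ∧ j + 1 < n + 1 then Equiv.swap ⟨j, by omega⟩ ⟨j + 1, h.2⟩ else 1

theorem prod_piFactor_apply (i : Fin (n + 1)) {k : ℕ} (hik : i.val ≤ k) (hkn : k ≤ n) :
    ((List.range k).map (piFactor i)).prod ⟨k, by omega⟩ = i := by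
  induction k, hik using Nat.le_induction with
  | base =>
    rw [List.prod_eq_one fun f hf => ?_]
    · rfl
    obtain ⟨j, hj, rfl⟩ := List.mem_map.1 hf
    exact dif_neg (by have := List.mem_range.1 hj; omega)
  | succ k hik ih =>
    have hk : piFactor i k = Equiv.swap ⟨k, by omega⟩ ⟨k + 1, by omega⟩ := dif_pos ⟨hik, by omega⟩
    rw [List.range_succ, List.map_append, List.prod_append, List.map_singleton,
      List.prod_singleton, hk, Equiv.Perm.mul_apply, Equiv.swap_apply_right]
    exact ih (by omega)

theorem piPerm_last (i : Fin (n + 1)) : piPerm i (Fin.last n) = i := by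
  have hn : piFactor i n = 1 := dif_neg (by omega)
  change ((List.range (n + 1)).map (piFactor i)).prod _ = i
  rw [List.range_succ, List.map_append, List.prod_append, List.map_singleton,
    List.prod_singleton, hn, mul_one]
  exact prod_piFactor_apply i i.is_le le_rfl

theorem cosetRep_smul (i : Fin (n + 1)) (g : G) : cosetRep i g • ((1 : G), Fin.last n) = (g, i) := by
  simp [wr_smul_def, cosetRep, piPerm_last]

theorem cosetRep_inv (i : Fin (n + 1)) (g : G) :
    (cosetRep i g)⁻¹
      = (SemidirectProduct.inr (piPerm i))⁻¹ * SemidirectProduct.inl (Pi.mulSingle i g⁻¹) := by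
  rw [cosetRep, mul_inv_rev, ← map_inv, ← map_inv, Pi.mulSingle_inv]

end Wreath

section Statement2

variable (𝕜 : Type*) [CommRing 𝕜] (G : Type*) [Group G] (n : ℕ)
variable (W : Type*) [AddCommGroup W] [Module 𝕜 W]
variable (ρW : Representation 𝕜 (Wr G (n + 1)) W)

theorem induced_iso_perm_tensor :
    ∃ e : (((Wr G (n + 1)) →₀ W) ⧸ tensorRel 𝕜 G n W ρW) ≃ₗ[𝕜] ((G × Fin (n + 1)) →₀ W),
      -- `e` is a homomorphism of `A_n`-modules
      (∀ (γ : Wr G (n + 1)) (y : (Wr G (n + 1)) →₀ W),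
        e (Submodule.Quotient.mk (actInd 𝕜 G n W γ y))
          = actDiag 𝕜 G n W ρW γ (e (Submodule.Quotient.mk y)))
      -- `e` is determined by `γ ⊗ w ↦ (γ · e_n) ⊗ (γ • w)`
      ∧ (∀ (γ : Wr G (n + 1)) (w : W),
        e (Submodule.Quotient.mk (Finsupp.single γ w))
          = Finsupp.single (γ.left (γ.right (Fin.last n)), γ.right (Fin.last n)) (ρW γ w))
      -- its inverse is determined by `g e_i ⊗ w ↦ g^{(i)} π_i ⊗ (π_i⁻¹ (g⁻¹)^{(i)}) • w`
      ∧ (∀ (g : G) (i : Fin (n + 1)) (w : W),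
        e.symm (Finsupp.single (g, i) w)
          = Submodule.Quotient.mk (Finsupp.single (cosetRep i g)
              (ρW ((SemidirectProduct.inr (piPerm i))⁻¹
                    * SemidirectProduct.inl (Pi.mulSingle i g⁻¹)) w))) := by
  refine ⟨inducedEquivPerm (ρ := ρW) (s := fun p => cosetRep p.2 p.1) fixLast_eq_stabilizer
    (fun p => cosetRep_smul p.2 p.1), fun γ y => ?_, fun γ w => ?_, fun g i w => ?_⟩
  · exact permOfFree_lmapDomain_mul _ γ y
  · exact (permOfFree_single _ γ w).trans (by rw [wr_smul_def, mul_one])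
  · exact (inducedEquivPerm_symm_single _ _ (g, i) w).trans (by rw [cosetRep_inv]; rfl)

end Statement2

end GPC
end

section
/- Let G be a group, and suppose ((Q,h),(P,g)) and ((Q,h'),(P,g')) are both compatible pairs of G-partitions, with (Q,h) ∼ (Q,h') and (P,g) ∼ (P,g'). Then (Q ⋆ P, h ⋆_{Q,P} g) ∼ (Q ⋆ P, h' ⋆_{Q,P} g'). -/
/-!
Statement 4: if `((Q,h),(P,g))` and `((Q,h'),(P,g'))` are compatible pairs of
`G`-partitions with `(Q,h) ∼ (Q,h')` and `(P,g) ∼ (P,g')`, then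
`(Q ⋆ P, h ⋆_{Q,P} g) ∼ (Q ⋆ P, h' ⋆_{Q,P} g')`.
-/

namespace GPC

variable {G : Type*} [Group G]

/-- Equivalence of `G`-partitions with the same underlying partition `P`
(a set partition is encoded as a `Setoid`, whose classes are the parts):
`(P, g) ∼ (P, g')` iff for every part there is `t ∈ G` with `g' = t * g` on that part. -/
def LabelEquiv {X : Type*} (P : Setoid X) (g g' : X → G) : Prop :=
  ∀ a : X, ∃ t : G, ∀ b : X, P a b → g' b = t * g b

section Stack

variable {k l m : ℕ}

/-- Embedding of the vertex set of `P` (bottom row `Fin k`, top row `Fin l`)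
into the three-row vertex set of the stacked diagram, where the top row of `P`
becomes the middle row. -/
def embBot : Fin k ⊕ Fin l → Fin k ⊕ (Fin l ⊕ Fin m) := Sum.map id Sum.inl

/-- Embedding of the vertex set of `Q` (bottom row `Fin l`, top row `Fin m`)
into the three-row vertex set of the stacked diagram, where the bottom row of `Q`
becomes the middle row. -/
def embTop : Fin l ⊕ Fin m → Fin k ⊕ (Fin l ⊕ Fin m) := Sum.inr

/-- The partition of the three-row vertex set of `stack(Q, P)` into connected
components: the equivalence relation generated by the parts of `P` and of `Q`. -/
def stackSetoid (P : Setoid (Fin k ⊕ Fin l)) (Q : Setoid (Fin l ⊕ Fin m)) :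
    Setoid (Fin k ⊕ (Fin l ⊕ Fin m)) :=
  Relation.EqvGen.setoid (fun x y =>
    (∃ a b, P a b ∧ x = embBot a ∧ y = embBot b)
      ∨ (∃ a b, Q a b ∧ x = embTop a ∧ y = embTop b))

/-- The composite partition `Q ⋆ P`: bottom and top vertices are in the same
part iff they are connected in `stack(Q, P)`. -/
def starPart (P : Setoid (Fin k ⊕ Fin l)) (Q : Setoid (Fin l ⊕ Fin m)) :
    Setoid (Fin k ⊕ Fin m) :=
  Setoid.comap (Sum.map id Sum.inr) (stackSetoid P Q)

/-- `α(Q, P)`: the number of connected components of `stack(Q, P)` consisting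
only of middle vertices. -/
noncomputable def alphaNum (P : Setoid (Fin k ⊕ Fin l)) (Q : Setoid (Fin l ⊕ Fin m)) : ℕ :=
  Nat.card {c : Quotient (stackSetoid P Q) //
    ∀ x, Quotient.mk (stackSetoid P Q) x = c → ∃ i : Fin l, x = Sum.inr (Sum.inl i)}

/-- The label `g_{i'} h_i⁻¹` of the `i`-th middle vertex of the stacked diagram
`stack((Q, h), (P, g))`. -/
def midLabel (g : Fin k ⊕ Fin l → G) (h : Fin l ⊕ Fin m → G) (i : Fin l) : G :=
  g (Sum.inr i) * (h (Sum.inl i))⁻¹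

/-- Compatibility of the pair `((Q, h), (P, g))`: any two middle vertices lying
in the same part of `Q` have equal labels. -/
def Compatible (P : Setoid (Fin k ⊕ Fin l)) (g : Fin k ⊕ Fin l → G)
    (Q : Setoid (Fin l ⊕ Fin m)) (h : Fin l ⊕ Fin m → G) : Prop :=
  ∀ i j : Fin l, Q (Sum.inl i) (Sum.inl j) → midLabel g h i = midLabel g h j

open scoped Classical in
/-- The labelling `h ⋆_{Q,P} g` of `Q ⋆ P`: bottom vertices keep the labels `g`,
and the top vertex `i'` gets `u * h_{i'}` where `u` is the (for compatible pairs,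
common) label of the middle vertices in the same part of `Q` as `i'`
(`u = 1` if there are none). -/
noncomputable def starLabel (g : Fin k ⊕ Fin l → G)
    (Q : Setoid (Fin l ⊕ Fin m)) (h : Fin l ⊕ Fin m → G) :
    Fin k ⊕ Fin m → G :=
  Sum.elim (fun a => g (Sum.inl a))
    (fun c => (if hc : ∃ j : Fin l, Q (Sum.inl j) (Sum.inr c)
                then midLabel g h hc.choose else 1) * h (Sum.inr c))

end Stack

section Aux

variable {k l m : ℕ}

/-- The "transition ratio" function on the vertices of the stacked diagram. -/
noncomputable def phi (g g' : Fin k ⊕ Fin l → G) (Q : Setoid (Fin l ⊕ Fin m))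
    (h h' : Fin l ⊕ Fin m → G) : Fin k ⊕ (Fin l ⊕ Fin m) → G := fun x =>
  match x with
  | Sum.inl i => g' (Sum.inl i) * (g (Sum.inl i))⁻¹
  | Sum.inr (Sum.inl j) => g' (Sum.inr j) * (g (Sum.inr j))⁻¹
  | Sum.inr (Sum.inr c) =>
      starLabel g' Q h' (Sum.inr c) * (starLabel g Q h (Sum.inr c))⁻¹

lemma LabelEquiv.ratio {X : Type*} {P : Setoid X} {g g' : X → G}
    (he : LabelEquiv P g g') {a b : X} (hab : P a b) :
    g' a * (g a)⁻¹ = g' b * (g b)⁻¹ := by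
  obtain ⟨t, ht⟩ := he a
  rw [ht a (P.refl a), ht b hab]
  group

lemma phi_embBot (g g' : Fin k ⊕ Fin l → G) (Q : Setoid (Fin l ⊕ Fin m))
    (h h' : Fin l ⊕ Fin m → G) (a : Fin k ⊕ Fin l) :
    phi g g' Q h h' (embBot (m := m) a) = g' a * (g a)⁻¹ := by
  cases a <;> rfl

lemma phi_ratio (g g' : Fin k ⊕ Fin l → G) (Q : Setoid (Fin l ⊕ Fin m))
    (h h' : Fin l ⊕ Fin m → G) (b : Fin k ⊕ Fin m) :
    phi g g' Q h h' (Sum.map id Sum.inr b)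
      = starLabel g' Q h' b * (starLabel g Q h b)⁻¹ := by
  cases b <;> rfl

lemma phi_mid (g g' : Fin k ⊕ Fin l → G) (Q : Setoid (Fin l ⊕ Fin m))
    (h h' : Fin l ⊕ Fin m → G) (j : Fin l) :
    phi g g' Q h h' (Sum.inr (Sum.inl j))
      = midLabel g' h' j * (h' (Sum.inl j) * (h (Sum.inl j))⁻¹)
          * (midLabel (m := m) g h j)⁻¹ := by
  show g' (Sum.inr j) * (g (Sum.inr j))⁻¹ = _
  unfold midLabel
  group

end Aux

theorem star_well_defined {G : Type*} [Group G] {k l m : ℕ}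
    (P : Setoid (Fin k ⊕ Fin l)) (g g' : Fin k ⊕ Fin l → G)
    (Q : Setoid (Fin l ⊕ Fin m)) (h h' : Fin l ⊕ Fin m → G)
    (hcompat : Compatible P g Q h) (hcompat' : Compatible P g' Q h')
    (hQ : LabelEquiv Q h h') (hP : LabelEquiv P g g') :
    LabelEquiv (starPart P Q) (starLabel g Q h) (starLabel g' Q h') := by
  classical
  set φ := phi g g' Q h h' with hφ
  -- the value of φ at a top vertex with a middle neighbour
  have htopval : ∀ (j : Fin l) (c : Fin m), Q (Sum.inl j) (Sum.inr c) →
      φ (Sum.inr (Sum.inr c))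
        = midLabel g' h' j * (h' (Sum.inl j) * (h (Sum.inl j))⁻¹)
            * (midLabel (m := m) g h j)⁻¹ := by
    intro j c hjc
    have hex : ∃ j : Fin l, Q (Sum.inl j) (Sum.inr c) := ⟨j, hjc⟩
    have hch : Q (Sum.inl hex.choose) (Sum.inr c) := hex.choose_spec
    have hjj : Q (Sum.inl j) (Sum.inl hex.choose) := Q.trans hjc (Q.symm hch)
    have e1 : midLabel (m := m) g h j = midLabel g h hex.choose := hcompat _ _ hjj
    have e2 : midLabel (m := m) g' h' j = midLabel g' h' hex.choose := hcompat' _ _ hjj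
    have e3 : h' (Sum.inl j) * (h (Sum.inl j))⁻¹
        = h' (Sum.inr c) * (h (Sum.inr c))⁻¹ := hQ.ratio hjc
    show starLabel g' Q h' (Sum.inr c) * (starLabel g Q h (Sum.inr c))⁻¹ = _
    simp only [starLabel, Sum.elim_inr, dif_pos hex]
    rw [← e1, ← e2, e3]
    group
  -- φ is constant on the generating relation
  have hbase : ∀ x y : Fin k ⊕ (Fin l ⊕ Fin m),
      ((∃ a b, P a b ∧ x = embBot a ∧ y = embBot b)
        ∨ (∃ a b, Q a b ∧ x = embTop a ∧ y = embTop b)) → φ x = φ y := by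
    rintro x y (⟨a, b, hab, rfl, rfl⟩ | ⟨a, b, hab, rfl, rfl⟩)
    · rw [hφ, phi_embBot, phi_embBot]
      exact hP.ratio hab
    · -- top relation: case on the two vertices of Q
      have key : ∀ (j : Fin l) (b : Fin l ⊕ Fin m), Q (Sum.inl j) b →
          φ (embTop b)
            = midLabel g' h' j * (h' (Sum.inl j) * (h (Sum.inl j))⁻¹)
                * (midLabel (m := m) g h j)⁻¹ := by
        intro j b hb
        cases b with
        | inl j' =>
          have hmid : φ (embTop (Sum.inl j'))
              = phi g g' Q h h' (Sum.inr (Sum.inl j')) := rfl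
          rw [hmid, phi_mid, ← hcompat _ _ hb, ← hcompat' _ _ hb, ← hQ.ratio hb]
        | inr c => exact htopval j c hb
      cases a with
      | inl j =>
        rw [key j _ hab]
        exact key j _ (Q.refl _)
      | inr c =>
        cases b with
        | inl j =>
          rw [key j _ (Q.symm hab)]
          exact (key j _ (Q.refl _)).symm
        | inr c' =>
          by_cases hex : ∃ j : Fin l, Q (Sum.inl j) (Sum.inr c)
          · obtain ⟨j, hj⟩ := hex
            rw [key j _ hj, key j _ (Q.trans hj hab)]
          · have hex' : ¬ ∃ j : Fin l, Q (Sum.inl j) (Sum.inr c') := by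
              rintro ⟨j, hj⟩
              exact hex ⟨j, Q.trans hj (Q.symm hab)⟩
            show starLabel g' Q h' (Sum.inr c) * (starLabel g Q h (Sum.inr c))⁻¹
              = starLabel g' Q h' (Sum.inr c') * (starLabel g Q h (Sum.inr c'))⁻¹
            simp only [starLabel, Sum.elim_inr, dif_neg hex, dif_neg hex', one_mul]
            exact hQ.ratio hab
  have hconst : ∀ x y, Relation.EqvGen (fun x y =>
        (∃ a b, P a b ∧ x = embBot a ∧ y = embBot b)
          ∨ (∃ a b, Q a b ∧ x = embTop a ∧ y = embTop b)) x y → φ x = φ y := by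
    intro x y hxy
    induction hxy with
    | rel x y hr => exact hbase x y hr
    | refl _ => rfl
    | symm _ _ _ ih => exact ih.symm
    | trans _ _ _ _ _ ih1 ih2 => exact ih1.trans ih2
  intro a
  refine ⟨φ (Sum.map id Sum.inr a), fun b hb => ?_⟩
  have hb' : stackSetoid P Q (Sum.map id Sum.inr a) (Sum.map id Sum.inr b) := hb
  have heq := hconst _ _ hb'
  rw [heq, hφ, phi_ratio]
  group

end GPC
end

section
/- Let P, Q, R be set partitions of X_k^l, X_l^m, X_m^p respectively (partitions of types (l;k), (m;l), (p;m)). Then (R ⋆ Q) ⋆ P = R ⋆ (Q ⋆ P), and α(R, Q ⋆ P) + α(Q, P) = α(R ⋆ Q, P) + α(R, Q). -/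
namespace Setoid

variable {α β γ δ : Type*}

theorem map_le_iff {r : Setoid α} {f : α → β} {t : Setoid β} :
    r.map f ≤ t ↔ r ≤ t.comap f :=
  ⟨fun h _ _ hxy => h (le_comap_map hxy),
    fun h => eqvGen_le fun _ _ ⟨_, _, hab, ha, hb⟩ => ha ▸ hb ▸ h hab⟩

theorem gc_map_comap (f : α → β) : GaloisConnection (fun r : Setoid α => r.map f) (comap f) :=
  fun _ _ => map_le_iff

theorem map_sup (r s : Setoid α) (f : α → β) : (r ⊔ s).map f = r.map f ⊔ s.map f :=
  (gc_map_comap f).l_sup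

theorem map_map (r : Setoid α) (f : α → β) (g : β → γ) : (r.map f).map g = r.map (g ∘ f) :=
  ((gc_map_comap f).compose (gc_map_comap g)).l_unique (gc_map_comap (g ∘ f)) fun _ => rfl

theorem map_rel_iff_of_injective {r : Setoid α} {f : α → β} (hf : f.Injective) {w w' : β} :
    r.map f w w' ↔ (∃ a b, r a b ∧ f a = w ∧ f b = w') ∨ w = w' := by
  rw [coe_map_of_ker_le r f (ker_eq_bot_iff.2 hf ▸ bot_le)]
  rfl

theorem eq_of_map_rel_of_notMem_range {r : Setoid α} {f : α → β} (hf : f.Injective) {w w' : β}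
    (hw : w ∉ Set.range f) (h : r.map f w w') : w = w' :=
  ((map_rel_iff_of_injective hf).1 h).resolve_left fun ⟨a, _, _, ha, _⟩ => hw ⟨a, ha⟩

theorem comap_sup_map (a : Setoid β) (b : Setoid α) (j : α → β) :
    (a ⊔ b.map j).comap j = a.comap j ⊔ b := by
  refine le_antisymm ?_ (sup_le (fun _ _ h => le_sup_left (a := a) h) (map_le_iff.1 le_sup_right))
  set c := a.comap j ⊔ b
  have hac : ∀ {x y}, a (j x) (j y) → c x y := fun h => le_sup_left (b := b) h
  -- Edges of `b.map j` join points of the image of `j`, so a path can be cut at its visits there.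
  let e : Setoid β :=
    { r := fun w₁ w₂ => a w₁ w₂ ∨ ∃ x y, a w₁ (j x) ∧ c x y ∧ a (j y) w₂
      iseqv :=
        { refl := fun w => .inl (a.refl' w)
          symm := by
            rintro _ _ (h | ⟨x, y, h₁, h₂, h₃⟩)
            exacts [.inl (a.symm' h), .inr ⟨y, x, a.symm' h₃, c.symm' h₂, a.symm' h₁⟩]
          trans := by
            rintro _ _ _ (h | ⟨x, y, h₁, h₂, h₃⟩) (h' | ⟨x', y', h₁', h₂', h₃'⟩)
            · exact .inl (a.trans' h h')
            · exact .inr ⟨x', y', a.trans' h h₁', h₂', h₃'⟩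
            · exact .inr ⟨x, y, h₁, h₂, a.trans' h₃ h'⟩
            · exact .inr ⟨x, y', h₁, c.trans' h₂ (c.trans' (hac (a.trans' h₃ h₁')) h₂'), h₃'⟩ } }
  have hle : a ⊔ b.map j ≤ e :=
    sup_le (fun _ _ h => .inl h)
      (map_le_iff.2 fun x y h => .inr ⟨x, y, a.refl' _, le_sup_right (a := a.comap j) h, a.refl' _⟩)
  intro x y h
  rcases hle h with h | ⟨x', y', h₁, h₂, h₃⟩
  exacts [hac h, c.trans' (hac h₁) (c.trans' h₂ (hac h₃))]

theorem comap_map_of_isPullback {f : α → γ} {g : β → γ} {f' : δ → α} {g' : δ → β}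
    (hf : f.Injective) (hg : g.Injective) (hcomm : f ∘ f' = g ∘ g')
    (hpb : ∀ a b, f a = g b → ∃ z, f' z = a ∧ g' z = b) (s : Setoid α) :
    (s.map f).comap g = (s.comap f').map g' := by
  refine le_antisymm (fun u v h => ?_) (map_le_iff.2 fun z z' h => ?_)
  · rcases (map_rel_iff_of_injective hf).1 h with ⟨a, b, hab, ha, hb⟩ | huv
    · obtain ⟨z, rfl, rfl⟩ := hpb a u ha
      obtain ⟨z', rfl, rfl⟩ := hpb b v hb
      exact le_comap_map (f := g') hab
    · exact hg huv ▸ refl' _ u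
  · show s.map f (g (g' z)) (g (g' z'))
    rw [← Function.comp_apply (f := g), ← Function.comp_apply (f := g), ← hcomm]
    exact le_comap_map h

def classesWithin (r : Setoid α) (s : Set α) : Set (Quotient r) :=
  {c | ∀ x, Quotient.mk r x = c → x ∈ s}

theorem ncard_classesWithin_comap {j : α → β} (T : Setoid β) {s : Set α} {U : Set β}
    (hU : j ⁻¹' U = s) (hcompl : (Set.range j)ᶜ ⊆ U) :
    ((T.comap j).classesWithin s).ncard =
      (T.classesWithin U ∩ Quotient.mk T '' (j '' s)).ncard := by
  let φ : Quotient (T.comap j) → Quotient T :=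
    Quotient.lift (fun x => Quotient.mk T (j x)) fun _ _ h => Quotient.sound h
  have hφ : φ.Injective := by
    rintro ⟨x⟩ ⟨y⟩ h
    exact Quotient.sound (Quotient.exact h :)
  rw [← Set.ncard_image_of_injective _ hφ]
  congr 1
  ext D
  constructor
  · rintro ⟨c, hc, rfl⟩
    induction c using Quotient.inductionOn with | h x => ?_
    refine ⟨fun w hw => ?_, j x, ⟨x, hc x rfl, rfl⟩, rfl⟩
    by_cases hw' : w ∈ Set.range j
    · obtain ⟨y, rfl⟩ := hw'
      rw [← Set.mem_preimage, hU]
      exact hc y (Quotient.sound (Quotient.exact hw :))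
    · exact hcompl hw'
  · rintro ⟨hD, _, ⟨x, -, rfl⟩, rfl⟩
    refine ⟨Quotient.mk _ x, fun y hy => ?_, rfl⟩
    rw [← hU]
    exact hD (j y) (Quotient.sound (Quotient.exact hy :))

theorem ncard_classesWithin_map {r : Setoid α} {j : α → β} (hj : j.Injective) (s : Set α) :
    ((r.map j).classesWithin (j '' s)).ncard = (r.classesWithin s).ncard := by
  let φ : Quotient r → Quotient (r.map j) :=
    Quotient.lift (fun x => Quotient.mk (r.map j) (j x)) fun _ _ h =>
      Quotient.sound (le_comap_map h)
  have hφ : φ.Injective := by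
    rintro ⟨x⟩ ⟨y⟩ h
    exact Quotient.sound ((comap_map_eq j r hj).le (Quotient.exact h :))
  rw [← Set.ncard_image_of_injective _ hφ]
  congr 1
  ext D
  constructor
  · rintro hD
    obtain ⟨w, rfl⟩ := D.exists_rep
    obtain ⟨x, hx, rfl⟩ := hD w rfl
    refine ⟨Quotient.mk r x, fun y hy => ?_, rfl⟩
    exact hj.mem_set_image.1 (hD (j y) (Quotient.sound (le_comap_map (Quotient.exact hy))))
  · rintro ⟨c, hc, rfl⟩
    induction c using Quotient.inductionOn with | h x => ?_
    intro w hw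
    rcases (map_rel_iff_of_injective hj).1 (Quotient.exact hw) with ⟨y, x', hyx, rfl, hx'⟩ | rfl
    · exact ⟨y, hc y (Quotient.sound (r.trans' hyx (hj hx' ▸ r.refl' x))), rfl⟩
    · exact ⟨x, hc x rfl, rfl⟩

theorem sup_rel_iff_of_rel_mem {r s : Setoid α} {S : Set α} (hs : ∀ x ∈ S, ∀ y, s x y → x = y)
    {x : α} (hx : ∀ y, r x y → y ∈ S) {y : α} : (r ⊔ s) x y ↔ r x y := by
  refine ⟨fun h => ?_, fun h => le_sup_left (b := s) h⟩
  rw [sup_def] at h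
  suffices ∀ a b, Relation.EqvGen (⇑r ⊔ ⇑s) a b → (r x a ↔ r x b) from
    (this x y h).1 (r.refl' x)
  intro a b hab
  induction hab with
  | rel a b hab =>
    rcases hab with hab | hab
    · exact ⟨fun h => r.trans' h hab, fun h => r.trans' h (r.symm' hab)⟩
    · exact ⟨fun h => hs a (hx a h) b hab ▸ h, fun h => hs b (hx b h) a (s.symm' hab) ▸ h⟩
  | refl => exact Iff.rfl
  | symm _ _ _ ih => exact ih.symm
  | trans _ _ _ _ _ ih₁ ih₂ => exact ih₁.trans ih₂

theorem ncard_classesWithin_sup {r s : Setoid α} {S : Set α}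
    (hs : ∀ x ∈ S, ∀ y, s x y → x = y) :
    ((r ⊔ s).classesWithin S).ncard = (r.classesWithin S).ncard := by
  let φ : Quotient r → Quotient (r ⊔ s) :=
    Quotient.lift (Quotient.mk (r ⊔ s)) fun _ _ h => Quotient.sound (le_sup_left (b := s) h)
  have hrel : ∀ c ∈ r.classesWithin S, ∀ x, Quotient.mk r x = c →
      ∀ y, (r ⊔ s) x y ↔ r x y := by
    rintro _ hc x rfl y
    exact sup_rel_iff_of_rel_mem hs fun y hy => hc y (Quotient.sound (r.symm' hy))
  have hφ : Set.InjOn φ (r.classesWithin S) := by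
    rintro ⟨x⟩ hx ⟨y⟩ - h
    exact Quotient.sound ((hrel _ hx x rfl y).1 (Quotient.exact h :))
  rw [← hφ.ncard_image]
  congr 1
  ext D
  constructor
  · rintro hD
    obtain ⟨x, rfl⟩ := D.exists_rep
    refine ⟨Quotient.mk r x, fun y hy => hD y (Quotient.sound ?_), rfl⟩
    exact le_sup_left (b := s) (Quotient.exact hy :)
  · rintro ⟨c, hc, rfl⟩
    induction c using Quotient.inductionOn with | h x => ?_
    intro w hw
    exact hc w (Quotient.sound (r.symm'
      ((hrel _ hc x rfl w).1 ((r ⊔ s).symm' (Quotient.exact hw :)))))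

theorem ncard_classesWithin_union (r : Setoid α) [Finite (Quotient r)] {s t : Set α}
    (hst : Disjoint s t) :
    (r.classesWithin (s ∪ t) ∩ Quotient.mk r '' t).ncard + (r.classesWithin s).ncard =
      (r.classesWithin (s ∪ t)).ncard := by
  rw [← Set.ncard_inter_add_ncard_sdiff_eq_ncard (r.classesWithin (s ∪ t)) (Quotient.mk r '' t)]
  congr 2
  ext D
  constructor
  · intro hD
    exact ⟨fun w hw => .inl (hD w hw), fun ⟨w, hwt, hw⟩ => hst.ne_of_mem (hD w hw) hwt rfl⟩
  · rintro ⟨hD, hDt⟩ w hw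
    exact (hD w hw).resolve_right fun hwt => hDt ⟨w, hwt, hw⟩

end Setoid

namespace GPC

section Stack4

variable {k l m p : ℕ}

theorem stackSetoid_eq_sup (P : Setoid (Fin k ⊕ Fin l)) (Q : Setoid (Fin l ⊕ Fin m)) :
    stackSetoid P Q = P.map embBot ⊔ Q.map embTop := by
  refine le_antisymm (Setoid.eqvGen_le ?_)
    (sup_le (Setoid.map_le_iff.2 ?_) (Setoid.map_le_iff.2 ?_))
  · rintro _ _ (⟨a, b, h, rfl, rfl⟩ | ⟨a, b, h, rfl, rfl⟩)
    exacts [le_sup_left (b := Q.map embTop) (Setoid.le_comap_map h),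
      le_sup_right (a := P.map embBot) (Setoid.le_comap_map h)]
  · exact fun a b h => .rel _ _ (.inl ⟨a, b, h, rfl, rfl⟩)
  · exact fun a b h => .rel _ _ (.inr ⟨a, b, h, rfl, rfl⟩)

abbrev FourRows (k l m p : ℕ) := Fin k ⊕ (Fin l ⊕ (Fin m ⊕ Fin p))

def rows01 : Fin k ⊕ Fin l → FourRows k l m p := Sum.map id Sum.inl
def rows12 : Fin l ⊕ Fin m → FourRows k l m p := Sum.inr ∘ Sum.map id Sum.inl
def rows23 : Fin m ⊕ Fin p → FourRows k l m p := Sum.inr ∘ Sum.inr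
def rows012 : Fin k ⊕ (Fin l ⊕ Fin m) → FourRows k l m p := Sum.map id (Sum.map id Sum.inl)
def rows123 : Fin l ⊕ (Fin m ⊕ Fin p) → FourRows k l m p := Sum.inr
def rows023 : Fin k ⊕ (Fin m ⊕ Fin p) → FourRows k l m p := Sum.map id Sum.inr
def rows013 : Fin k ⊕ (Fin l ⊕ Fin p) → FourRows k l m p := Sum.map id (Sum.map id Sum.inr)

theorem rows01_injective : (rows01 : _ → FourRows k l m p).Injective :=
  Function.injective_id.sumMap Sum.inl_injective

theorem rows23_injective : (rows23 : _ → FourRows k l m p).Injective :=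
  Sum.inr_injective.comp Sum.inr_injective

theorem rows012_injective : (rows012 : _ → FourRows k l m p).Injective :=
  Function.injective_id.sumMap (Function.injective_id.sumMap Sum.inl_injective)

theorem rows123_injective : (rows123 : _ → FourRows k l m p).Injective :=
  Sum.inr_injective

theorem rows023_injective : (rows023 : _ → FourRows k l m p).Injective :=
  Function.injective_id.sumMap Sum.inr_injective

theorem rows013_injective : (rows013 : _ → FourRows k l m p).Injective :=
  Function.injective_id.sumMap (Function.injective_id.sumMap Sum.inr_injective)

def row1 : Set (FourRows k l m p) := Set.range fun i => Sum.inr (Sum.inl i)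
def row2 : Set (FourRows k l m p) := Set.range fun c => Sum.inr (Sum.inr (Sum.inl c))

theorem disjoint_row1_row2 : Disjoint (row1 : Set (FourRows k l m p)) row2 := by
  rw [Set.disjoint_iff]
  rintro _ ⟨⟨i, rfl⟩, ⟨c, hc⟩⟩
  cases hc

def fourRowSetoid (P : Setoid (Fin k ⊕ Fin l)) (Q : Setoid (Fin l ⊕ Fin m))
    (R : Setoid (Fin m ⊕ Fin p)) : Setoid (FourRows k l m p) :=
  P.map rows01 ⊔ Q.map rows12 ⊔ R.map rows23

variable (P : Setoid (Fin k ⊕ Fin l)) (Q : Setoid (Fin l ⊕ Fin m)) (R : Setoid (Fin m ⊕ Fin p))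

theorem fourRowSetoid_eq_left :
    fourRowSetoid P Q R = (stackSetoid P Q).map rows012 ⊔ R.map rows23 := by
  rw [fourRowSetoid, stackSetoid_eq_sup, Setoid.map_sup, Setoid.map_map, Setoid.map_map]
  congr
  funext x
  rcases x with _ | _ <;> rfl

theorem fourRowSetoid_eq_right :
    fourRowSetoid P Q R = P.map rows01 ⊔ (stackSetoid Q R).map rows123 := by
  rw [stackSetoid_eq_sup, Setoid.map_sup, Setoid.map_map, Setoid.map_map, fourRowSetoid, sup_assoc]
  rfl

theorem stackSetoid_starPart_left :
    stackSetoid (starPart P Q) R = (fourRowSetoid P Q R).comap rows023 := by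
  have hcomm : (rows012 ∘ Sum.map id Sum.inr : Fin k ⊕ Fin m → FourRows k l m p) =
      rows023 ∘ embBot := by
    funext x
    rcases x with _ | _ <;> rfl
  have hpb : ∀ (a : Fin k ⊕ (Fin l ⊕ Fin m)) (b : Fin k ⊕ (Fin m ⊕ Fin p)),
      rows012 a = rows023 b → ∃ z, Sum.map id Sum.inr z = a ∧ embBot z = b := by
    rintro (a | i | c) (a' | c' | d) h <;> cases h
    exacts [⟨.inl a, rfl, rfl⟩, ⟨.inr c, rfl, rfl⟩]
  have hR : R.map (rows23 : _ → FourRows k l m p) = (R.map embTop).map rows023 :=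
    (Setoid.map_map R embTop rows023).symm
  rw [fourRowSetoid_eq_left, hR, Setoid.comap_sup_map,
    Setoid.comap_map_of_isPullback rows012_injective rows023_injective hcomm hpb,
    stackSetoid_eq_sup]
  rfl

theorem stackSetoid_starPart_right :
    stackSetoid P (starPart Q R) = (fourRowSetoid P Q R).comap rows013 := by
  have hcomm : (rows123 ∘ Sum.map id Sum.inr : Fin l ⊕ Fin p → FourRows k l m p) =
      rows013 ∘ embTop := rfl
  have hpb : ∀ (a : Fin l ⊕ (Fin m ⊕ Fin p)) (b : Fin k ⊕ (Fin l ⊕ Fin p)),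
      rows123 a = rows013 b → ∃ z, Sum.map id Sum.inr z = a ∧ embTop z = b := by
    rintro (i | c | d) (a' | i' | d') h <;> cases h <;> exact ⟨_, rfl, rfl⟩
  have hP : P.map (rows01 : _ → FourRows k l m p) = (P.map embBot).map rows013 := by
    rw [Setoid.map_map]
    congr
    funext x
    rcases x with _ | _ <;> rfl
  rw [fourRowSetoid_eq_right, hP, sup_comm, Setoid.comap_sup_map,
    Setoid.comap_map_of_isPullback rows123_injective rows013_injective hcomm hpb,
    stackSetoid_eq_sup, sup_comm]
  rfl

theorem starPart_assoc : starPart P (starPart Q R) = starPart (starPart P Q) R := by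
  have h : (rows013 ∘ Sum.map id Sum.inr : Fin k ⊕ Fin p → FourRows k l m p) =
      rows023 ∘ Sum.map id Sum.inr := by
    funext x
    rcases x with _ | _ <;> rfl
  show Setoid.comap _ (stackSetoid P (starPart Q R)) = Setoid.comap _ (stackSetoid (starPart P Q) R)
  rw [stackSetoid_starPart_left, stackSetoid_starPart_right]
  exact congrArg (fun f => Setoid.comap f (fourRowSetoid P Q R)) h

def midRow {α β γ : Type*} : Set (α ⊕ (β ⊕ γ)) := {x | ∃ i, x = Sum.inr (Sum.inl i)}

theorem alphaNum_eq_ncard {a b c : ℕ} (X : Setoid (Fin a ⊕ Fin b)) (Y : Setoid (Fin b ⊕ Fin c)) :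
    alphaNum X Y = ((stackSetoid X Y).classesWithin midRow).ncard :=
  rfl

theorem alphaNum_starPart_left : alphaNum (starPart P Q) R =
    ((fourRowSetoid P Q R).classesWithin (row1 ∪ row2) ∩ Quotient.mk _ '' row2).ncard := by
  have hU : rows023 ⁻¹' (row1 ∪ row2 : Set (FourRows k l m p)) = midRow := by
    ext x
    rcases x with a | c | d <;> simp [rows023, row1, row2, midRow]
  have hcompl : (Set.range rows023)ᶜ ⊆ (row1 ∪ row2 : Set (FourRows k l m p)) := by
    rintro (a | i | c | d) h <;> simp [rows023, row1, row2] at h ⊢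
  have himage : rows023 '' midRow = (row2 : Set (FourRows k l m p)) := by
    ext x
    simp [rows023, row2, midRow]
  rw [alphaNum_eq_ncard, stackSetoid_starPart_left, Setoid.ncard_classesWithin_comap _ hU hcompl,
    himage]

theorem alphaNum_starPart_right : alphaNum P (starPart Q R) =
    ((fourRowSetoid P Q R).classesWithin (row1 ∪ row2) ∩ Quotient.mk _ '' row1).ncard := by
  have hU : rows013 ⁻¹' (row1 ∪ row2 : Set (FourRows k l m p)) = midRow := by
    ext x
    rcases x with a | i | d <;> simp [rows013, row1, row2, midRow]
  have hcompl : (Set.range rows013)ᶜ ⊆ (row1 ∪ row2 : Set (FourRows k l m p)) := by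
    rintro (a | i | c | d) h <;> simp [rows013, row1, row2] at h ⊢
  have himage : rows013 '' midRow = (row1 : Set (FourRows k l m p)) := by
    ext x
    simp [rows013, row1, midRow]
  rw [alphaNum_eq_ncard, stackSetoid_starPart_right, Setoid.ncard_classesWithin_comap _ hU hcompl,
    himage]

theorem alphaNum_eq_ncard_row1 :
    alphaNum P Q = ((fourRowSetoid P Q R).classesWithin row1).ncard := by
  have himage : rows012 '' midRow = (row1 : Set (FourRows k l m p)) := by
    ext x
    simp [rows012, row1, midRow]
  have hR : ∀ w ∈ (row1 : Set (FourRows k l m p)), ∀ w', R.map rows23 w w' → w = w' := by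
    rintro _ ⟨i, rfl⟩ w' h
    refine Setoid.eq_of_map_rel_of_notMem_range rows23_injective ?_ h
    rintro ⟨x, hx⟩
    cases hx
  rw [fourRowSetoid_eq_left, Setoid.ncard_classesWithin_sup hR, ← himage,
    Setoid.ncard_classesWithin_map rows012_injective, alphaNum_eq_ncard]

theorem alphaNum_eq_ncard_row2 :
    alphaNum Q R = ((fourRowSetoid P Q R).classesWithin row2).ncard := by
  have himage : rows123 '' midRow = (row2 : Set (FourRows k l m p)) := by
    ext x
    simp [rows123, row2, midRow]
  have hP : ∀ w ∈ (row2 : Set (FourRows k l m p)), ∀ w', P.map rows01 w w' → w = w' := by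
    rintro _ ⟨c, rfl⟩ w' h
    refine Setoid.eq_of_map_rel_of_notMem_range rows01_injective ?_ h
    rintro ⟨x | x, hx⟩ <;> cases hx
  rw [fourRowSetoid_eq_right, sup_comm, Setoid.ncard_classesWithin_sup hP, ← himage,
    Setoid.ncard_classesWithin_map rows123_injective, alphaNum_eq_ncard]

end Stack4

theorem star_assoc_and_alpha (k l m p : ℕ)
    (P : Setoid (Fin k ⊕ Fin l)) (Q : Setoid (Fin l ⊕ Fin m)) (R : Setoid (Fin m ⊕ Fin p)) :
    -- `(R ⋆ Q) ⋆ P = R ⋆ (Q ⋆ P)`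
    starPart P (starPart Q R) = starPart (starPart P Q) R
    -- `α(R, Q ⋆ P) + α(Q, P) = α(R ⋆ Q, P) + α(R, Q)`
    ∧ alphaNum (starPart P Q) R + alphaNum P Q = alphaNum P (starPart Q R) + alphaNum Q R := by
  refine ⟨starPart_assoc P Q R, ?_⟩
  rw [alphaNum_starPart_left, alphaNum_eq_ncard_row1 P Q R, alphaNum_starPart_right,
    alphaNum_eq_ncard_row2 P Q R, Setoid.ncard_classesWithin_union _ disjoint_row1_row2,
    Set.union_comm, Setoid.ncard_classesWithin_union _ disjoint_row1_row2.symm]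

end GPC
end

section
/- Let G be a finite group, X a finite set, and r ∈ ℕ. Let G_r = G^r ⋊ S_r act on the set of G-equivariant surjections X × G → Fin r × G by (g,π)·f := σ_{(g,π)} ∘ f, where σ_{(g,π)} is the G-equivariant bijection (i,h) ↦ (π(i), g_{π(i)} h) of Fin r × G, and let G_r act on Partition_r(X) × G^X by (g,π)·((P_1,…,P_r), λ) := ((P_{π^{−1}(1)},…,P_{π^{−1}(r)}), x ↦ λ(x)·g_{π(i_x)}^{−1}), where i_x is the unique index with x ∈ P_{i_x}. Then the bijection ((P_1,…,P_r), λ) ↦ (f : (x,h) ↦ (i_x, λ(x)^{−1} h)) between Partition_r(X) × G^X and the set of G-equivariant surjections X × G → Fin r × G is equivariant for these two G_r-actions. -/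
/-!
Statement 17: the bijection `((P₁, …, P_r), λ) ↦ (f : (x, h) ↦ (i_x, λ(x)⁻¹ h))` between
`Partition_r(X) × G^X` and the `G`-equivariant surjections `X × G → Fin r × G` is
equivariant for the two actions of the wreath product `G_r = G^r ⋊ S_r`:
on surjections, `(g, π) · f = σ_{(g,π)} ∘ f` where `σ_{(g,π)} (i, h) = (π i, g (π i) h)`;
on pairs, `(g, π) · ((P₁, …, P_r), λ) = ((P_{π⁻¹ 1}, …, P_{π⁻¹ r}), x ↦ λ x * (g (π (i_x)))⁻¹)`.
-/

namespace GPC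

variable (G : Type*) [Group G]

variable {G} {X : Type*} {r : ℕ}

variable (X r) in
/-- An ordered partition of `X` into `r` nonempty parts. -/
def PartitionTuple : Type _ :=
  {P : Fin r → Set X // (∀ i, (P i).Nonempty)
    ∧ (∀ i j, i ≠ j → Disjoint (P i) (P j))
    ∧ (⋃ i, P i) = Set.univ}

/-- The unique index `i_x` with `x ∈ P_{i_x}`. -/
noncomputable def idxOf (P : PartitionTuple X r) (x : X) : Fin r :=
  Classical.choose (show ∃ i, x ∈ P.val i by
    have hx : x ∈ ⋃ i, P.val i := by rw [P.prop.2.2]; trivial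
    exact Set.mem_iUnion.mp hx)

/-- The `G`-equivariant surjection attached to `((P₁, …, P_r), λ)`. -/
noncomputable def toSurj (P : PartitionTuple X r) (lam : X → G) : X × G → Fin r × G :=
  fun y => (idxOf P y.1, (lam y.1)⁻¹ * y.2)

/-- Reindexing an ordered partition by a permutation: `(π · P)_i = P_{π⁻¹ i}`. -/
def permPT (π : Equiv.Perm (Fin r)) (P : PartitionTuple X r) : PartitionTuple X r :=
  ⟨fun i => P.val (π⁻¹ i), by
    refine ⟨fun i => P.prop.1 _, fun i j hij => P.prop.2.1 _ _ (by simpa using hij), ?_⟩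
    ext x
    simp only [Set.mem_iUnion, Set.mem_univ, iff_true]
    have hx : x ∈ ⋃ i, P.val i := by rw [P.prop.2.2]; trivial
    obtain ⟨j, hj⟩ := Set.mem_iUnion.mp hx
    exact ⟨π j, by simpa using hj⟩⟩

/-- The action of `γ = (g, π) ∈ G_r` on pairs `((P₁, …, P_r), λ)`:
`(π · P, x ↦ λ x * (g (π (i_x)))⁻¹)`. -/
noncomputable def actPair (γ : Wr G r) (p : PartitionTuple X r × (X → G)) :
    PartitionTuple X r × (X → G) :=
  (permPT γ.right p.1, fun x => p.2 x * (γ.left (γ.right (idxOf p.1 x)))⁻¹)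

/-- The `G`-equivariant bijection `σ_γ` of `Fin r × G` attached to `γ = (g, π) ∈ G_r`:
`(i, h) ↦ (π i, g (π i) h)`. -/
def sigmaFun (γ : Wr G r) : Fin r × G → Fin r × G :=
  fun y => (γ.right y.1, γ.left (γ.right y.1) * y.2)

lemma mem_idxOf (P : PartitionTuple X r) (x : X) : x ∈ P.val (idxOf P x) :=
  Classical.choose_spec (show ∃ i, x ∈ P.val i by
    have hx : x ∈ ⋃ i, P.val i := by rw [P.prop.2.2]; trivial
    exact Set.mem_iUnion.mp hx)

lemma idxOf_eq (P : PartitionTuple X r) {x : X} {i : Fin r} (hx : x ∈ P.val i) :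
    idxOf P x = i := by
  by_contra h
  exact (P.prop.2.1 _ _ h).le_bot ⟨mem_idxOf P x, hx⟩

lemma idxOf_permPT (π : Equiv.Perm (Fin r)) (P : PartitionTuple X r) (x : X) :
    idxOf (permPT π P) x = π (idxOf P x) := by
  refine idxOf_eq _ ?_
  show x ∈ P.val (π⁻¹ (π (idxOf P x)))
  simpa using mem_idxOf P x

theorem toSurj_equivariant (G : Type*) [Group G] [Fintype G]
    (X : Type*) [Fintype X] (r : ℕ)
    (γ : Wr G r) (P : PartitionTuple X r) (lam : X → G) :
    toSurj (actPair γ (P, lam)).1 (actPair γ (P, lam)).2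
      = sigmaFun γ ∘ toSurj P lam := by
  funext y
  simp only [toSurj, actPair, sigmaFun, Function.comp_apply, idxOf_permPT]
  refine Prod.ext rfl ?_
  simp [mul_assoc]

end GPC
end

section
/- Let G be a finite group and X a finite set. Consider pairs (r, f) where r ∈ ℕ and f : X × G → Fin r × G is a G-equivariant surjection (for the right-translation G-actions); declare (r,f) equivalent to (r',f') if r = r' and f' = σ ∘ f for some G-equivariant bijection σ of Fin r × G. Then the set of equivalence classes of such pairs is in bijection with the disjoint union, over all set partitions P of X, of the quotients G^X/∼_P, where for λ, λ' ∈ G^X one has λ ∼_P λ' iff for every part B of P there exists t ∈ G with λ_x = t λ'_x for all x ∈ B. -/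
/-!
An equivariant map `φ : A × G → B × G` is determined by its values at the points `(a, 1)`:
if `φ (a, 1) = (i a, l a)` then `φ (a, h) = (i a, l a * h)`, and `φ` is injective (surjective)
iff `i` is. So the equivariant permutations of `Fin r × G` are the pairs `(π, t)` of a
permutation `π` of `Fin r` and a map `t : Fin r → G`, and composing with one replaces `(i, l)`
by `(π ∘ i, (t ∘ i) * l)`. The class of `f` is therefore recorded exactly by the partition
`ker i`, whose number of parts is `r`, together with `l` up to a left translation on each
part; numbering the parts of a partition shows that every such pair occurs.
-/

namespace GPC

variable (G : Type*) [Group G] (X : Type*)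

/-- A map `f : X × G → Fin r × G` (or `Fin r × G → Fin r × G`) is `G`-equivariant for
the right-translation actions if it commutes with `(x, h) ↦ (x, h g⁻¹)`. -/
def IsEquivariant {r : ℕ} (f : X × G → Fin r × G) : Prop :=
  ∀ (g : G) (y : X × G), f (y.1, y.2 * g⁻¹) = ((f y).1, (f y).2 * g⁻¹)

/-- A permutation `σ` of `Fin r × G` is `G`-equivariant if it commutes with the
right-translation action. -/
def IsEquivariantPerm {r : ℕ} (σ : Equiv.Perm (Fin r × G)) : Prop :=
  ∀ (g : G) (y : Fin r × G), σ (y.1, y.2 * g⁻¹) = ((σ y).1, (σ y).2 * g⁻¹)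

/-- The `G`-equivariant surjections `X × G → Fin r × G`. -/
def EquivSurj (r : ℕ) : Type _ :=
  {f : X × G → Fin r × G // Function.Surjective f ∧ IsEquivariant G X f}

/-- Two equivariant surjections are equivalent iff they differ by a `G`-equivariant
bijection of `Fin r × G`. -/
def esSetoid (r : ℕ) : Setoid (EquivSurj G X r) where
  r f f' := ∃ σ : Equiv.Perm (Fin r × G),
    IsEquivariantPerm G σ ∧ f'.val = ⇑σ ∘ f.val
  iseqv := by
    constructor
    · intro f
      exact ⟨Equiv.refl _, fun g y => rfl, rfl⟩
    · rintro f f' ⟨σ, hσ, hf⟩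
      refine ⟨σ.symm, ?_, ?_⟩
      · intro g y
        apply σ.injective
        rw [Equiv.apply_symm_apply, hσ, Equiv.apply_symm_apply]
      · rw [hf]
        funext y
        simp
    · rintro f f' f'' ⟨σ, hσ, hf⟩ ⟨τ, hτ, hf'⟩
      refine ⟨σ.trans τ, ?_, ?_⟩
      · intro g y
        simp only [Equiv.trans_apply, hσ g y, hτ g (σ y)]
      · rw [hf', hf]
        rfl

/-- The labelling equivalence `∼_P` on `G^X` attached to a set partition `P` of `X`
(encoded as a `Setoid`): `λ ∼_P λ'` iff for every part there is `t ∈ G` with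
`λ = t * λ'` on that part. -/
def labelSetoid (P : Setoid X) : Setoid (X → G) where
  r lam lam' := ∀ x : X, ∃ t : G, ∀ y : X, P x y → lam y = t * lam' y
  iseqv := by
    constructor
    · intro lam x
      exact ⟨1, fun y _ => (one_mul _).symm⟩
    · intro lam lam' h x
      obtain ⟨t, ht⟩ := h x
      exact ⟨t⁻¹, fun y hy => by rw [ht y hy, inv_mul_cancel_left]⟩
    · intro lam lam' lam'' h h' x
      obtain ⟨t, ht⟩ := h x
      obtain ⟨t', ht'⟩ := h' x
      exact ⟨t * t', fun y hy => by rw [ht y hy, ht' y hy, mul_assoc]⟩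

section Twist

variable {G} {A B C : Type*}

def twist (i : A → B) (l : A → G) : A × G → B × G := fun y => (i y.1, l y.1 * y.2)

@[simp]
lemma twist_apply (i : A → B) (l : A → G) (a : A) (h : G) :
    twist i l (a, h) = (i a, l a * h) := rfl

lemma twist_commute (i : A → B) (l : A → G) (g : G) (y : A × G) :
    twist i l (y.1, y.2 * g⁻¹) = ((twist i l y).1, (twist i l y).2 * g⁻¹) := by
  simp [twist, mul_assoc]

lemma eq_twist_of_commute {φ : A × G → B × G}
    (hφ : ∀ (g : G) (y : A × G), φ (y.1, y.2 * g⁻¹) = ((φ y).1, (φ y).2 * g⁻¹)) :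
    φ = twist (fun a => (φ (a, 1)).1) (fun a => (φ (a, 1)).2) := by
  funext ⟨a, h⟩
  simpa using hφ h⁻¹ (a, 1)

lemma twist_injective_iff {i : A → B} {l : A → G} :
    Function.Injective (twist i l) ↔ Function.Injective i := by
  constructor
  · intro h a a' hi
    have : twist i l (a, 1) = twist i l (a', (l a')⁻¹ * l a) := by simp [hi]
    exact congrArg Prod.fst (h this)
  · rintro h ⟨a, g⟩ ⟨a', g'⟩ he
    obtain ⟨hi, hl⟩ := Prod.ext_iff.1 he
    obtain rfl : a = a' := h hi
    simp_all

lemma twist_surjective_iff {i : A → B} {l : A → G} :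
    Function.Surjective (twist i l) ↔ Function.Surjective i := by
  constructor
  · intro h b
    obtain ⟨⟨a, _⟩, ha⟩ := h (b, 1)
    exact ⟨a, congrArg Prod.fst ha⟩
  · rintro h ⟨b, g⟩
    obtain ⟨a, rfl⟩ := h b
    exact ⟨(a, (l a)⁻¹ * g), by simp⟩

lemma twist_bijective_iff {i : A → B} {l : A → G} :
    Function.Bijective (twist i l) ↔ Function.Bijective i :=
  and_congr twist_injective_iff twist_surjective_iff

lemma twist_inj {i i' : A → B} {l l' : A → G} :
    twist i l = twist i' l' ↔ i = i' ∧ l = l' := by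
  refine ⟨fun h => ?_, fun ⟨hi, hl⟩ => hi ▸ hl ▸ rfl⟩
  have h1 (a : A) := Prod.ext_iff.1 (congrFun h (a, 1))
  exact ⟨funext fun a => (h1 a).1, funext fun a => by simpa using (h1 a).2⟩

lemma twist_comp_twist (i : A → B) (l : A → G) (i' : B → C) (l' : B → G) :
    twist i' l' ∘ twist i l = twist (i' ∘ i) (fun a => l' (i a) * l a) := by
  funext ⟨a, h⟩
  simp [mul_assoc]

lemma isEquivariantPerm_iff {r : ℕ} {σ : Equiv.Perm (Fin r × G)} :
    IsEquivariantPerm G σ ↔ ∃ (π : Equiv.Perm (Fin r)) (t : Fin r → G), ⇑σ = twist π t := by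
  constructor
  · intro hσ
    have hσt := eq_twist_of_commute hσ
    have hπ := twist_bijective_iff.1 (hσt ▸ σ.bijective)
    exact ⟨Equiv.ofBijective _ hπ, _, hσt⟩
  · rintro ⟨π, t, hσ⟩ g y
    simp only [hσ, twist_commute]

end Twist

lemma ker_eq_ker_iff_exists_equiv {A B C : Type*} {i : A → B} {i' : A → C}
    (hi : Function.Surjective i) (hi' : Function.Surjective i') :
    Setoid.ker i = Setoid.ker i' ↔ ∃ e : B ≃ C, i' = e ∘ i := by
  constructor
  · intro h
    have hker (a a' : A) : i a = i a' ↔ i' a = i' a' := by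
      simpa only [Setoid.ker_def] using Setoid.ext_iff.1 h a a'
    have hinv (a : A) : i' (Function.surjInv hi (i a)) = i' a :=
      (hker _ _).1 (Function.surjInv_eq hi _)
    refine ⟨Equiv.ofBijective (i' ∘ Function.surjInv hi) ⟨fun b b' hb => ?_, fun c => ?_⟩,
      funext fun a => (hinv a).symm⟩
    · simpa [Function.surjInv_eq] using (hker _ _).2 hb
    · obtain ⟨a, rfl⟩ := hi' c
      exact ⟨i a, hinv a⟩
  · rintro ⟨e, rfl⟩
    ext a a'
    simp [Setoid.ker_def]

section Labels

variable {G X} {B : Type*}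

lemma sigma_mk_eq_iff {P P' : Setoid X} {a b : X → G} :
    (⟨P, ⟦a⟧⟩ : Σ Q : Setoid X, Quotient (labelSetoid G X Q)) = ⟨P', ⟦b⟧⟩ ↔
      P = P' ∧ labelSetoid G X P a b := by
  constructor
  · intro h
    obtain ⟨rfl, h⟩ := Sigma.mk.inj_iff.1 h
    exact ⟨rfl, Quotient.exact (eq_of_heq h)⟩
  · rintro ⟨rfl, h⟩
    exact congrArg _ (Quotient.sound h)

lemma labelSetoid_ker_iff {i : X → B} (hi : Function.Surjective i) {a b : X → G} :
    labelSetoid G X (Setoid.ker i) a b ↔ ∃ t : B → G, ∀ x, b x = t (i x) * a x := by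
  constructor
  · intro h
    choose s hs using h
    refine ⟨fun j => (s (Function.surjInv hi j))⁻¹, fun x => ?_⟩
    rw [hs _ x (Function.surjInv_eq hi (i x)), inv_mul_cancel_left]
  · rintro ⟨t, ht⟩ x
    refine ⟨(t (i x))⁻¹, fun y (hy : i x = i y) => ?_⟩
    rw [ht y, ← hy, inv_mul_cancel_left]

end Labels

namespace EquivSurj

variable {G X} {r : ℕ}

def index (f : EquivSurj G X r) : X → Fin r := fun x => (f.1 (x, 1)).1

def label (f : EquivSurj G X r) : X → G := fun x => (f.1 (x, 1)).2

lemma val_eq_twist (f : EquivSurj G X r) : f.1 = twist f.index f.label :=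
  eq_twist_of_commute f.2.2

lemma index_surjective (f : EquivSurj G X r) : Function.Surjective f.index :=
  twist_surjective_iff.1 (f.val_eq_twist ▸ f.2.1)

def ofTwist (i : X → Fin r) (hi : Function.Surjective i) (l : X → G) : EquivSurj G X r :=
  ⟨twist i l, twist_surjective_iff.2 hi, twist_commute i l⟩

@[simp]
lemma index_ofTwist (i : X → Fin r) (hi : Function.Surjective i) (l : X → G) :
    (ofTwist i hi l).index = i := by
  funext x
  simp [index, ofTwist]

@[simp]
lemma label_ofTwist (i : X → Fin r) (hi : Function.Surjective i) (l : X → G) :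
    (ofTwist i hi l).label = l := by
  funext x
  simp [label, ofTwist]

lemma rel_iff {f f' : EquivSurj G X r} :
    esSetoid G X r f f' ↔ ∃ (π : Equiv.Perm (Fin r)) (t : Fin r → G),
      f'.index = π ∘ f.index ∧ ∀ x, f'.label x = t (f.index x) * f.label x := by
  change (∃ σ, IsEquivariantPerm G σ ∧ _) ↔ _
  simp only [isEquivariantPerm_iff, f.val_eq_twist, f'.val_eq_twist]
  constructor
  · rintro ⟨σ, ⟨π, t, hσ⟩, h⟩
    rw [hσ, twist_comp_twist, twist_inj] at h
    exact ⟨π, t, h.1, congrFun h.2⟩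
  · rintro ⟨π, t, hi, hl⟩
    refine ⟨Equiv.ofBijective _ (twist_bijective_iff.2 π.bijective), ⟨π, t, rfl⟩, ?_⟩
    rw [Equiv.coe_ofBijective, twist_comp_twist, twist_inj]
    exact ⟨hi, funext hl⟩

def invariant (f : EquivSurj G X r) : Σ P : Setoid X, Quotient (labelSetoid G X P) :=
  ⟨Setoid.ker f.index, ⟦f.label⟧⟩

lemma invariant_eq_iff {f f' : EquivSurj G X r} :
    f.invariant = f'.invariant ↔ esSetoid G X r f f' := by
  rw [invariant, invariant, sigma_mk_eq_iff, rel_iff,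
    ker_eq_ker_iff_exists_equiv f.index_surjective f'.index_surjective,
    labelSetoid_ker_iff f.index_surjective]
  constructor
  · rintro ⟨⟨π, hπ⟩, t, ht⟩
    exact ⟨π, t, hπ, ht⟩
  · rintro ⟨π, t, hπ, ht⟩
    exact ⟨⟨π, hπ⟩, t, ht⟩

lemma eq_of_invariant_eq {s : ℕ} {f : EquivSurj G X r} {f' : EquivSurj G X s}
    (h : f.invariant = f'.invariant) : r = s := by
  obtain ⟨e, -⟩ := (ker_eq_ker_iff_exists_equiv f.index_surjective f'.index_surjective).1
    (congrArg Sigma.fst h)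
  exact Fin.equiv_iff_eq.1 ⟨e⟩

end EquivSurj

open EquivSurj

def classify : (Σ r : ℕ, Quotient (esSetoid G X r)) →
    Σ P : Setoid X, Quotient (labelSetoid G X P) :=
  fun a => Quotient.lift invariant (fun _ _ => invariant_eq_iff.2) a.2

lemma classify_injective : Function.Injective (classify G X) := by
  rintro ⟨r, ⟨f⟩⟩ ⟨s, ⟨f'⟩⟩ h
  change f.invariant = f'.invariant at h
  obtain rfl := eq_of_invariant_eq h
  exact congrArg _ (Quotient.sound (invariant_eq_iff.1 h))

lemma classify_surjective [Finite X] : Function.Surjective (classify G X) := by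
  rintro ⟨P, ⟨l⟩⟩
  let e := Finite.equivFin (Quotient P)
  have hker : Setoid.ker (e ∘ Quotient.mk P) = P := by
    ext x y
    simp [Setoid.ker_def, Quotient.eq]
  let f := ofTwist (e ∘ Quotient.mk P) (e.surjective.comp Quotient.mk_surjective) l
  refine ⟨⟨_, ⟦f⟧⟩, sigma_mk_eq_iff.2 ⟨?_, ?_⟩⟩
  · rwa [index_ofTwist]
  · rw [label_ofTwist]

theorem subobject_classification_general (G : Type*) [Group G]
    (X : Type*) [Fintype X] :
    Nonempty ((Σ r : ℕ, Quotient (esSetoid G X r))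
      ≃ (Σ P : Setoid X, Quotient (labelSetoid G X P))) :=
  ⟨Equiv.ofBijective (classify G X) ⟨classify_injective G X, classify_surjective G X⟩⟩

theorem subobject_classification (G : Type*) [Group G] [Fintype G]
    (X : Type*) [Fintype X] :
    Nonempty ((Σ r : ℕ, Quotient (esSetoid G X r))
      ≃ (Σ P : Setoid X, Quotient (labelSetoid G X P))) :=
  subobject_classification_general G X

end GPC
end
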